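/- Let G and G′ be finite directed graphs on the same vertex set V with nonnegative edge weights, and let S ⊆ V be a set of initially blue vertices. Suppose G′ is obtained from G by increasing the weights of some directed edges (u,w) with u ∈ S (all edges whose weights change have their tail in S, the changed weights satisfy W_{G′}(u,w) ≥ W_G(u,w), and all other edge weights are unchanged). Then ept_rzf(G,S) ≥ ept_rzf(G′,S). -/

import Mathlib

open scoped ENNReal NNReal

namespace RZF

variable {V : Type*} [Fintype V] [DecidableEq V]

/-- Probability that the white vertex `x` turns blue in one round of weighted
randomized zero forcing with weights `w`, given the current blue set `B`
(`0` when the total incoming weight of `x` is `0`). -/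
noncomputable def turnProb (w : V → V → ℝ≥0) (B : Finset V) (x : V) : ℝ≥0 :=
  (∑ u ∈ B, w u x) / ∑ u, w u x

/-- One-round transition probability of the RZF Markov chain from blue set `B`
to blue set `C`: each white vertex independently turns blue with probability
`turnProb w B ·`, and blue vertices stay blue. -/
noncomputable def stepProb (w : V → V → ℝ≥0) (B C : Finset V) : ℝ≥0∞ :=
  if B ⊆ C then
    (∏ x ∈ C \ B, (turnProb w B x : ℝ≥0∞)) *
      ∏ x ∈ Cᶜ, (1 - (turnProb w B x : ℝ≥0∞))
  else 0

/-- Distribution of the blue set after `t` rounds, started from `S`. -/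
noncomputable def state (w : V → V → ℝ≥0) (S : Finset V) : ℕ → Finset V → ℝ≥0∞
  | 0 => fun C => if C = S then 1 else 0
  | t + 1 => fun C => ∑ B : Finset V, state w S t B * stepProb w B C

/-- Expected propagation time `∑ₜ P(Bₜ ≠ V(G))`; this equals `E[τ]` when the
all-blue state is reachable from `S`, and `∞` otherwise. -/
noncomputable def ept (w : V → V → ℝ≥0) (S : Finset V) : ℝ≥0∞ :=
  ∑' t : ℕ, ∑ C ∈ Finset.univ.filter (fun C : Finset V => C ≠ Finset.univ),
    state w S t C

/-- Minimum expected propagation time over singleton starting sets. -/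
noncomputable def eptMin (w : V → V → ℝ≥0) : ℝ≥0∞ :=
  ⨅ v : V, ept w {v}

/-- The weight function of an unweighted directed graph: weight `1` on each
edge and `0` otherwise, so that `turnProb` is the fraction of in-neighbors
that are blue. -/
def unweight (adj : V → V → Prop) [DecidableRel adj] : V → V → ℝ≥0 :=
  fun u v => if adj u v then 1 else 0

end RZF

/-- `reachIn adj t a b` : there is a directed path of length at most `t`
from `a` to `b` in the directed graph with adjacency relation `adj`. -/
def reachIn {V : Type*} (adj : V → V → Prop) : ℕ → V → V → Prop
  | 0, a, b => a = b
  | t + 1, a, b => reachIn adj t a b ∨ ∃ c, reachIn adj t a c ∧ adj c b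

/-! Under `w'` every vertex outside a blue set `B ⊇ S` turns blue with at least the probability
it has under `w`: the extra weight on edges leaving `S` is added to both the numerator and the
denominator of `turnProb`, since `S ⊆ B`. Writing one round as a product of independent Bernoulli
trials, the expectation of an antitone function of the new blue set does not increase when the trial
probabilities increase, nor when the current blue set grows. Induction on `t` then
shows that the blue set `Bₜ` under `w'` stochastically dominates the one under `w`, and
`ept = ∑ₜ E[1{Bₜ ≠ V}]` with `C ↦ 1{C ≠ V}` antitone. -/

open Finset

theorem ENNReal.mul_add_one_sub_mul_le {a b p q : ℝ≥0∞} (hab : a ≤ b) (hpq : p ≤ q)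
    (hq : q ≤ 1) : q * a + (1 - q) * b ≤ p * a + (1 - p) * b := by
  have hsplit : 1 - p = (1 - q) + (q - p) := (tsub_add_tsub_cancel hq hpq).symm
  calc q * a + (1 - q) * b = p * a + (q - p) * a + (1 - q) * b := by
        rw [← add_mul, add_tsub_cancel_of_le hpq]
    _ ≤ p * a + (q - p) * b + (1 - q) * b := by gcongr
    _ = p * a + (1 - p) * b := by rw [hsplit]; ring

theorem NNReal.div_le_add_div_add {a b : ℝ≥0} (d : ℝ≥0) (hab : a ≤ b) :
    a / b ≤ (a + d) / (b + d) := by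
  rcases eq_or_ne b 0 with rfl | hb
  · simp [nonpos_iff_eq_zero.mp hab]
  rw [div_le_div_iff₀ (pos_iff_ne_zero.mpr hb) (by positivity)]
  calc a * (b + d) = a * b + a * d := mul_add _ _ _
    _ ≤ a * b + d * b := by rw [mul_comm d]; gcongr
    _ = (a + d) * b := by ring

section ProductBernoulli

variable {α : Type*} [DecidableEq α]

noncomputable def prodBernoulliExp (A : Finset α) (p : α → ℝ≥0∞) (f : Finset α → ℝ≥0∞) :
    ℝ≥0∞ :=
  ∑ T ∈ A.powerset, (∏ x ∈ T, p x) * (∏ x ∈ A \ T, (1 - p x)) * f T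

theorem prodBernoulliExp_insert {a : α} {A : Finset α} (ha : a ∉ A) (p : α → ℝ≥0∞)
    (f : Finset α → ℝ≥0∞) :
    prodBernoulliExp (insert a A) p f =
      p a * prodBernoulliExp A p (fun T => f (insert a T)) +
        (1 - p a) * prodBernoulliExp A p f := by
  unfold prodBernoulliExp
  rw [sum_powerset_insert ha, mul_sum, mul_sum, add_comm]
  congr 1 <;> refine sum_congr rfl fun T hT => ?_
  · have haT : a ∉ T := fun h => ha (mem_powerset.mp hT h)
    rw [insert_sdiff_insert, sdiff_insert_of_notMem ha, prod_insert haT]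
    ring
  · have haAT : a ∉ A \ T := fun h => ha (mem_sdiff.mp h).1
    rw [insert_sdiff_of_notMem _ fun h => ha (mem_powerset.mp hT h), prod_insert haAT]
    ring

theorem prodBernoulliExp_le_of_le_of_antitone (A : Finset α) {p q : α → ℝ≥0∞}
    (hpq : ∀ x, p x ≤ q x) (hq : ∀ x, q x ≤ 1) {f : Finset α → ℝ≥0∞} (hf : Antitone f) :
    prodBernoulliExp A q f ≤ prodBernoulliExp A p f := by
  induction A using Finset.induction generalizing f with
  | empty => simp [prodBernoulliExp]
  | insert a A ha ih =>
    have hfa : Antitone fun T => f (insert a T) := fun T T' h => hf (insert_subset_insert a h)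
    rw [prodBernoulliExp_insert ha, prodBernoulliExp_insert ha]
    calc q a * prodBernoulliExp A q (fun T => f (insert a T)) + (1 - q a) * prodBernoulliExp A q f
        ≤ p a * prodBernoulliExp A q (fun T => f (insert a T)) +
            (1 - p a) * prodBernoulliExp A q f :=
          ENNReal.mul_add_one_sub_mul_le
            (sum_le_sum fun T _ => mul_le_mul_right (hf (subset_insert a T)) _) (hpq a) (hq a)
      _ ≤ p a * prodBernoulliExp A p (fun T => f (insert a T)) +
            (1 - p a) * prodBernoulliExp A p f := by
          gcongr
          exacts [ih hfa, ih hf]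

end ProductBernoulli

namespace RZF

variable {V : Type*} [Fintype V]

theorem turnProb_le_one (w : V → V → ℝ≥0) (B : Finset V) (x : V) : turnProb w B x ≤ 1 :=
  div_le_one_of_le₀ (sum_le_sum_of_subset (subset_univ B)) zero_le

theorem turnProb_mono (w : V → V → ℝ≥0) {B B' : Finset V} (h : B ⊆ B') (x : V) :
    turnProb w B x ≤ turnProb w B' x :=
  div_le_div_of_nonneg_right (sum_le_sum_of_subset h) zero_le

theorem turnProb_le_of_weights {w w' : V → V → ℝ≥0} {S B : Finset V}
    (hout : ∀ u x : V, u ∉ S → w' u x = w u x) (hin : ∀ u x : V, u ∈ S → w u x ≤ w' u x)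
    (hSB : S ⊆ B) (x : V) : turnProb w B x ≤ turnProb w' B x := by
  set δ : V → ℝ≥0 := fun u => w' u x - w u x
  have hw' : ∀ u, w' u x = w u x + δ u := fun u => by
    by_cases hu : u ∈ S
    · exact (add_tsub_cancel_of_le (hin u x hu)).symm
    · simp [δ, hout u x hu]
  have hδ : ∑ u, δ u = ∑ u ∈ B, δ u :=
    (sum_subset (subset_univ B) fun u _ hu => by simp [δ, hout u x fun h => hu (hSB h)]).symm
  simp only [turnProb, hw', sum_add_distrib, hδ]
  exact NNReal.div_le_add_div_add _ (sum_le_sum_of_subset (subset_univ B))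

variable [DecidableEq V]

/-- The probability that `x` is blue after one round started from the blue set `B`. -/
noncomputable def blueProb (w : V → V → ℝ≥0) (B : Finset V) (x : V) : ℝ≥0∞ :=
  if x ∈ B then 1 else (turnProb w B x : ℝ≥0∞)

theorem blueProb_le_one (w : V → V → ℝ≥0) (B : Finset V) (x : V) : blueProb w B x ≤ 1 := by
  unfold blueProb
  split_ifs
  · exact le_rfl
  · exact_mod_cast turnProb_le_one w B x

theorem blueProb_le_blueProb {w w' : V → V → ℝ≥0} {B B' : Finset V} (hBB' : B ⊆ B')
    (h : ∀ x, turnProb w B x ≤ turnProb w' B' x) (x : V) :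
    blueProb w B x ≤ blueProb w' B' x := by
  unfold blueProb
  by_cases hx : x ∈ B'
  · rw [if_pos hx]
    exact blueProb_le_one w B x
  · rw [if_neg hx, if_neg fun h => hx (hBB' h)]
    exact_mod_cast h x

theorem sum_stepProb_mul (w : V → V → ℝ≥0) (B : Finset V) (f : Finset V → ℝ≥0∞) :
    ∑ C, stepProb w B C * f C = prodBernoulliExp univ (blueProb w B) f := by
  rw [prodBernoulliExp, powerset_univ]
  refine sum_congr rfl fun C _ => ?_
  by_cases hBC : B ⊆ C
  · have hblue : ∏ x ∈ C, blueProb w B x = ∏ x ∈ C \ B, (turnProb w B x : ℝ≥0∞) := by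
      rw [← prod_subset sdiff_subset fun x hxC hx => ?_]
      · exact prod_congr rfl fun x hx => by simp [blueProb, (mem_sdiff.mp hx).2]
      · have hxB : x ∈ B := by_contra fun hxB => hx (mem_sdiff.mpr ⟨hxC, hxB⟩)
        simp [blueProb, hxB]
    have hwhite : ∏ x ∈ univ \ C, (1 - blueProb w B x) =
        ∏ x ∈ Cᶜ, (1 - (turnProb w B x : ℝ≥0∞)) := by
      rw [← compl_eq_univ_sdiff]
      refine prod_congr rfl fun x hx => ?_
      have hxB : x ∉ B := fun hxB => mem_compl.mp hx (hBC hxB)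
      simp [blueProb, hxB]
    rw [stepProb, if_pos hBC, hblue, hwhite]
  · obtain ⟨u, huB, huC⟩ := not_subset.mp hBC
    have hu : 1 - blueProb w B u = 0 := by simp [blueProb, huB]
    rw [stepProb, if_neg hBC, zero_mul,
      prod_eq_zero (mem_sdiff.mpr ⟨mem_univ u, huC⟩) hu, mul_zero, zero_mul]

theorem sum_stepProb_mul_le_of_antitone {w w' : V → V → ℝ≥0} {B B' : Finset V}
    (h : ∀ x, blueProb w B x ≤ blueProb w' B' x) {f : Finset V → ℝ≥0∞} (hf : Antitone f) :
    ∑ C, stepProb w' B' C * f C ≤ ∑ C, stepProb w B C * f C := by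
  rw [sum_stepProb_mul, sum_stepProb_mul]
  exact prodBernoulliExp_le_of_le_of_antitone _ h (blueProb_le_one w' B') hf

theorem state_eq_zero_of_not_subset (w : V → V → ℝ≥0) {S B : Finset V} (h : ¬S ⊆ B) (t : ℕ) :
    state w S t B = 0 := by
  induction t generalizing B with
  | zero => exact if_neg fun hBS => h hBS.ge
  | succ t ih =>
    refine sum_eq_zero fun B' _ => ?_
    by_cases hSB' : S ⊆ B'
    · rw [stepProb, if_neg fun hB'B => h (hSB'.trans hB'B), mul_zero]
    · rw [ih hSB', zero_mul]

theorem sum_state_succ_mul (w : V → V → ℝ≥0) (S : Finset V) (t : ℕ) (f : Finset V → ℝ≥0∞) :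
    ∑ C, state w S (t + 1) C * f C = ∑ B, state w S t B * ∑ C, stepProb w B C * f C := by
  simp only [state, sum_mul, mul_sum, mul_assoc]
  exact sum_comm

theorem sum_state_mul_le_of_antitone {w w' : V → V → ℝ≥0} {S : Finset V}
    (hle : ∀ B, S ⊆ B → ∀ x, turnProb w B x ≤ turnProb w' B x) (t : ℕ)
    {f : Finset V → ℝ≥0∞} (hf : Antitone f) :
    ∑ C, state w' S t C * f C ≤ ∑ C, state w S t C * f C := by
  induction t generalizing f with
  | zero => rfl
  | succ t ih =>
    have hstep : Antitone fun B => ∑ C, stepProb w' B C * f C := fun B B' hBB' =>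
      sum_stepProb_mul_le_of_antitone (blueProb_le_blueProb hBB' (turnProb_mono w' hBB')) hf
    rw [sum_state_succ_mul, sum_state_succ_mul]
    refine (ih hstep).trans (sum_le_sum fun B _ => ?_)
    by_cases hSB : S ⊆ B
    · exact mul_le_mul_right
        (sum_stepProb_mul_le_of_antitone (blueProb_le_blueProb subset_rfl (hle B hSB)) hf) _
    · simp [state_eq_zero_of_not_subset w hSB]

theorem ept_eq_tsum_sum_state_mul (w : V → V → ℝ≥0) (S : Finset V) :
    ept w S = ∑' t, ∑ C, state w S t C * if C = univ then 0 else 1 := by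
  simp [ept, sum_filter]

theorem ept_le_of_turnProb_le {w w' : V → V → ℝ≥0} {S : Finset V}
    (hle : ∀ B, S ⊆ B → ∀ x, turnProb w B x ≤ turnProb w' B x) : ept w' S ≤ ept w S := by
  have hf : Antitone fun C : Finset V => if C = univ then (0 : ℝ≥0∞) else 1 := fun C C' hCC' => by
    by_cases hC' : C' = univ
    · simp [hC']
    · have hC : C ≠ univ := fun hC => hC' (univ_subset_iff.mp (hC ▸ hCC'))
      simp [hC, hC']
  rw [ept_eq_tsum_sum_state_mul, ept_eq_tsum_sum_state_mul]
  exact ENNReal.tsum_le_tsum fun t => sum_state_mul_le_of_antitone hle t hf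

end RZF

/-- Increasing the weights of some directed edges whose tails
lie in the initial blue set `S` (all other edge weights unchanged) cannot
increase the expected propagation time of weighted RZF. -/
theorem rzf_ept_weight_increase_out_of_S {V : Type*} [Fintype V] [DecidableEq V]
    (w w' : V → V → ℝ≥0) (S : Finset V)
    (hout : ∀ u x : V, u ∉ S → w' u x = w u x)
    (hin : ∀ u x : V, u ∈ S → w u x ≤ w' u x) :
    RZF.ept w' S ≤ RZF.ept w S :=
  RZF.ept_le_of_turnProb_le fun _ hSB => RZF.turnProb_le_of_weights hout hin hSB
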